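/- Suppose a recurrent network applies the same layer function repeatedly, where the state space is partitioned into D+1 segments each carrying a flag bit and a payload, and the transition function, given that segment i's flag is set and segment i+1's flag is unset, sets segment i+1's flag and writes g_i applied to segment i's payload into segment i+1's payload (for given functions g_1,...,g_D), leaving earlier segments unchanged. Then starting from the state with only segment 1 flagged and payload x, after D iterations segment D+1 is flagged with payload g_D(g_{D-1}(...g_1(x)...)). -/

import Mathlib

/-!
After `k` applications of `T`, every segment `j ≤ k` is flagged and segment `j` carries the
composite of the first `j` layers, while every later segment is still unflagged: the flagged
segments are frozen, segment `k + 1` is the only one whose predecessor is flagged and which is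
itself unflagged, so it fires, and the segments beyond it wait. At `k = D` the last segment
holds the composite of all `D` layers.
-/

namespace SharedLayer

variable {S : Type*} {D : ℕ}

def prefixComp (g : Fin D → S → S) (x : S) (n : ℕ) : S :=
  ((List.finRange D).take n).foldl (fun s i => g i s) x

@[simp]
theorem prefixComp_zero (g : Fin D → S → S) (x : S) : prefixComp g x 0 = x := by
  simp [prefixComp]

theorem prefixComp_succ (g : Fin D → S → S) (x : S) (i : Fin D) :
    prefixComp g x (i + 1) = g i (prefixComp g x i) := by
  simp [prefixComp, List.take_add_one]

theorem prefixComp_self (g : Fin D → S → S) (x : S) :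
    prefixComp g x D = (List.finRange D).foldl (fun s i => g i s) x := by
  rw [prefixComp, List.take_of_length_le (List.length_finRange).le]

def IsStateAfter (g : Fin D → S → S) (x : S) (k : ℕ) (st : Fin (D + 1) → Bool × S) : Prop :=
  (∀ j : Fin (D + 1), (j : ℕ) ≤ k → st j = (true, prefixComp g x j)) ∧
    ∀ j : Fin (D + 1), k < j → (st j).1 = false

theorem isStateAfter_zero {g : Fin D → S → S} {x : S} {init : Fin (D + 1) → Bool × S}
    (hinit0 : init 0 = (true, x)) (hinit : ∀ j : Fin (D + 1), j ≠ 0 → (init j).1 = false) :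
    IsStateAfter g x 0 init := by
  refine ⟨fun j hj => ?_, fun j hj => hinit j (Fin.pos_iff_ne_zero.mp hj)⟩
  obtain rfl : j = 0 := Fin.ext (Nat.le_zero.mp hj)
  simpa using hinit0

variable {g : Fin D → S → S} {x : S} {T : (Fin (D + 1) → Bool × S) → (Fin (D + 1) → Bool × S)}
  {st : Fin (D + 1) → Bool × S} {k : ℕ}

theorem IsStateAfter.apply_of_le
    (hfrozen : ∀ st (j : Fin (D + 1)), (st j).1 = true → T st j = st j)
    (h : IsStateAfter g x k st) {j : Fin (D + 1)} (hj : (j : ℕ) ≤ k) :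
    T st j = (true, prefixComp g x j) := by
  rw [hfrozen st j (by rw [h.1 j hj]), h.1 j hj]

theorem IsStateAfter.apply_succ_self
    (hfire : ∀ st (i : Fin D), (st i.castSucc).1 = true → (st i.succ).1 = false →
      T st i.succ = (true, g i (st i.castSucc).2))
    (h : IsStateAfter g x k st) {i : Fin D} (hi : (i : ℕ) = k) :
    T st i.succ = (true, prefixComp g x i.succ) := by
  have hprev : st i.castSucc = (true, prefixComp g x i) := h.1 i.castSucc hi.le
  rw [hfire st i (by rw [hprev]) (h.2 i.succ (by rw [Fin.val_succ]; omega)), hprev, Fin.val_succ,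
    prefixComp_succ]

theorem IsStateAfter.apply_succ_of_lt
    (hwait : ∀ st (i : Fin D), (st i.castSucc).1 = false → (st i.succ).1 = false →
      T st i.succ = st i.succ)
    (h : IsStateAfter g x k st) {i : Fin D} (hi : k < i) :
    (T st i.succ).1 = false := by
  have hcur : (st i.succ).1 = false := h.2 i.succ (by rw [Fin.val_succ]; omega)
  rw [hwait st i (h.2 i.castSucc hi) hcur, hcur]

theorem IsStateAfter.step
    (hfrozen : ∀ st (j : Fin (D + 1)), (st j).1 = true → T st j = st j)
    (hfire : ∀ st (i : Fin D), (st i.castSucc).1 = true → (st i.succ).1 = false →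
      T st i.succ = (true, g i (st i.castSucc).2))
    (hwait : ∀ st (i : Fin D), (st i.castSucc).1 = false → (st i.succ).1 = false →
      T st i.succ = st i.succ)
    (h : IsStateAfter g x k st) : IsStateAfter g x (k + 1) (T st) := by
  constructor
  · intro j hj
    rcases Nat.lt_or_ge (j : ℕ) (k + 1) with hlt | hge
    · exact h.apply_of_le hfrozen (Nat.lt_succ_iff.mp hlt)
    · cases j using Fin.cases with
      | zero => simp at hge
      | succ i => exact h.apply_succ_self hfire (by rw [Fin.val_succ] at hj hge; omega)
  · intro j hj
    cases j using Fin.cases with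
    | zero => simp at hj
    | succ i => exact h.apply_succ_of_lt hwait (by rw [Fin.val_succ] at hj; omega)

end SharedLayer

open SharedLayer in
/-- A recurrent network repeatedly applying one shared layer `T`
can sequence `D` distinct layers `g 0, …, g (D-1)`.  The state consists of `D+1`
segments, each a flag bit and a payload in `S`.  The transition `T` satisfies:
a flagged segment is left unchanged; if segment `i` is flagged and segment `i+1`
is not, then segment `i+1` becomes flagged with payload `g i` applied to segment
`i`'s payload; and an unflagged segment whose predecessor is unflagged is left
unchanged.  Starting from the state where only segment `0` is flagged, with
payload `x`, after `D` iterations the last segment is flagged and carries the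
composition `g_{D-1}(⋯ g_1(g_0(x)) ⋯)`. -/
theorem shared_layer_simulates_depth {S : Type*} (D : ℕ) (g : Fin D → S → S)
    (T : (Fin (D + 1) → Bool × S) → (Fin (D + 1) → Bool × S))
    (hfrozen : ∀ st (j : Fin (D + 1)), (st j).1 = true → T st j = st j)
    (hfire : ∀ st (i : Fin D), (st i.castSucc).1 = true → (st i.succ).1 = false →
      T st i.succ = (true, g i (st i.castSucc).2))
    (hwait : ∀ st (i : Fin D), (st i.castSucc).1 = false → (st i.succ).1 = false →
      T st i.succ = st i.succ)
    (x : S) (init : Fin (D + 1) → Bool × S)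
    (hinit0 : init 0 = (true, x))
    (hinit : ∀ j : Fin (D + 1), j ≠ 0 → (init j).1 = false) :
    (T^[D] init (Fin.last D)) =
      (true, (List.finRange D).foldl (fun s i => g i s) x) := by
  have hstate : ∀ k, IsStateAfter g x k (T^[k] init) := by
    intro k
    induction k with
    | zero => exact isStateAfter_zero hinit0 hinit
    | succ k ih =>
      rw [Function.iterate_succ_apply']
      exact ih.step hfrozen hfire hwait
  rw [(hstate D).1 (Fin.last D) le_rfl, Fin.val_last, prefixComp_self]
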